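/- arXiv:1206.6685 — 6 statements merged into one kernel-verified Lean document; each statement's English description precedes it below -/
import Mathlib

section
/- For any finite tuple J with entries in {0,1,2} and any sequence b : ℕ → ℤ satisfying b(0) = v₁(J), b(1) = v₂(J), b(2) = v₃(J), and the tribonacci recursion b(s+3) = b(s) + b(s+1) + b(s+2) for all s ≥ 0, one has Δ(J ⌢ 1^s) = (b(s), b(s+1), b(s+2)) for every s ≥ 0, where J ⌢ 1^s denotes J followed by s copies of the index 1. In particular, the sequence v₁(J), v₂(J), v₃(J), v₃(J,1), v₃(J,1,1), v₃(J,1,1,1), … is a tribonacci sequence. -/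
open Matrix

/-- The three Farey matrices `A₀, A₁, A₂`. -/
def A : Fin 3 → Matrix (Fin 3) (Fin 3) ℤ :=
  ![!![1,0,1; 0,1,1; 0,0,1],
    !![0,0,1; 1,0,1; 0,1,1],
    !![0,1,1; 0,0,1; 1,0,1]]

/-- `Δ I = (v₁(I), v₂(I), v₃(I)) = (1,1,1)·A_{i₁}·⋯·A_{iₙ}`. -/
def Δ (I : List (Fin 3)) : Fin 3 → ℤ :=
  Matrix.vecMul ![1,1,1] ((I.map A).prod)

lemma delta_append_one (I : List (Fin 3)) :
    Δ (I ++ [1]) = Matrix.vecMul (Δ I) (A 1) := by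
  simp [Δ, Matrix.vecMul_vecMul]

lemma vecMul_A1 (x y z : ℤ) :
    Matrix.vecMul ![x, y, z] (A 1) = ![y, z, x + y + z] := by
  funext i
  fin_cases i <;>
    simp [A, Matrix.vecMul, dotProduct, Fin.sum_univ_three]

theorem stmt2 (J : List (Fin 3)) (b : ℕ → ℤ)
    (h0 : b 0 = Δ J 0) (h1 : b 1 = Δ J 1) (h2 : b 2 = Δ J 2)
    (hrec : ∀ s, b (s + 3) = b s + b (s + 1) + b (s + 2)) :
    ∀ s : ℕ, Δ (J ++ List.replicate s 1) = ![b s, b (s + 1), b (s + 2)] := by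
  intro s
  induction s with
  | zero =>
    simp only [List.replicate, List.append_nil]
    funext i
    fin_cases i <;> simp [h0, h1, h2]
  | succ n ih =>
    have : J ++ List.replicate (n + 1) 1 = (J ++ List.replicate n 1) ++ [1] := by
      simp [List.replicate_succ' (n := n)]
    rw [this, delta_append_one, ih, vecMul_A1, hrec n]
end

section
/- The sum of all terms of Stern's triatomic sequence at level n equals 3·5ⁿ; that is, for every n ≥ 0, the sum over all tuples I ∈ {0,1,2}ⁿ of v₁(I) + v₂(I) + v₃(I) equals 3·5ⁿ. -/
open Matrix

/-! The level-`n` products `A_{i₁}⋯A_{iₙ}` sum to `(A₀ + A₁ + A₂)ⁿ`, and every row of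
`A₀ + A₁ + A₂` sums to `5`, i.e. `(1,1,1)ᵀ` is an eigenvector with eigenvalue `5`. Hence the
level-`n` total is `(1,1,1)·5ⁿ·(1,1,1)ᵀ = 3·5ⁿ`. -/

theorem sum_prod_ofFn_eq_sum_pow {R ι : Type*} [Semiring R] [Fintype ι] (M : ι → R) (n : ℕ) :
    ∑ f : Fin n → ι, (List.ofFn fun j => M (f j)).prod = (∑ i, M i) ^ n := by
  induction n with
  | zero => simp
  | succ n ih =>
    rw [← (Fin.consEquiv fun _ => ι).sum_comp, Fintype.sum_prod_type, pow_succ', ← ih,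
      Finset.sum_mul]
    refine Finset.sum_congr rfl fun i _ => ?_
    rw [Finset.mul_sum]
    simp [Fin.consEquiv, List.ofFn_succ]

theorem Matrix.pow_mulVec_of_mulVec_eq_smul {R m : Type*} [CommSemiring R] [Fintype m]
    [DecidableEq m] {S : Matrix m m R} {w : m → R} {c : R} (h : S *ᵥ w = c • w) (k : ℕ) :
    (S ^ k) *ᵥ w = c ^ k • w := by
  induction k with
  | zero => simp
  | succ k ih => rw [pow_succ', ← mulVec_mulVec, ih, mulVec_smul, h, smul_smul, pow_succ]

theorem sum_A_mulVec_one : (∑ i, A i) *ᵥ 1 = (5 : ℤ) • 1 := by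
  decide

theorem stmt4 (n : ℕ) :
    ∑ f : Fin n → Fin 3,
      (Δ (List.ofFn f) 0 + Δ (List.ofFn f) 1 + Δ (List.ofFn f) 2) = 3 * 5 ^ n := by
  have hone : (![1, 1, 1] : Fin 3 → ℤ) = 1 := by decide
  calc ∑ f : Fin n → Fin 3, (Δ (List.ofFn f) 0 + Δ (List.ofFn f) 1 + Δ (List.ofFn f) 2)
      = ∑ f : Fin n → Fin 3, 1 ⬝ᵥ ((List.ofFn fun j => A (f j)).prod *ᵥ 1) := by
        simp only [Δ, hone, dotProduct_mulVec, dotProduct_one, Fin.sum_univ_three, List.map_ofFn,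
          Function.comp_def]
    _ = 1 ⬝ᵥ ((∑ i, A i) ^ n *ᵥ 1) := by
        rw [← sum_prod_ofFn_eq_sum_pow, sum_mulVec, dotProduct_sum]
    _ = 3 * 5 ^ n := by
        rw [pow_mulVec_of_mulVec_eq_smul sum_A_mulVec_one, dotProduct_smul]
        simp [mul_comm]
end

section
/- For every n ≥ 2, the number 2n+1 occurs exactly 9 times as a third component at level n; that is, δₙ³(2n+1) = 9, i.e. exactly 9 tuples I ∈ {0,1,2}ⁿ satisfy v₃(I) = 2n+1. -/
open Matrix

/-- `δ n j m` : the number of tuples `I ∈ {0,1,2}ⁿ` with `v_{j+1}(I) = m`. -/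
def δ (n : ℕ) (j : Fin 3) (m : ℤ) : ℕ :=
  (Finset.univ.filter (fun f : Fin n → Fin 3 => Δ (List.ofFn f) j = m)).card

/-- `δtot n m` : the number of occurrences of `m` at level `n`. -/
def δtot (n : ℕ) (m : ℤ) : ℕ := δ n 0 m + δ n 1 m + δ n 2 m



def step (i : Fin 3) (p : ℤ × ℤ × ℤ) : ℤ × ℤ × ℤ :=
  if i = 0 then (p.1, p.2.1, p.1 + p.2.1 + p.2.2)
  else if i = 1 then (p.2.1, p.2.2, p.1 + p.2.1 + p.2.2)
  else (p.2.2, p.1, p.1 + p.2.1 + p.2.2)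

def run (p : ℤ × ℤ × ℤ) : List (Fin 3) → ℤ × ℤ × ℤ
  | [] => p
  | i :: I => run (step i p) I

lemma vecMul_A (i : Fin 3) (a b c : ℤ) :
    vecMul ![a,b,c] (A i) = ![(step i (a,b,c)).1, (step i (a,b,c)).2.1, (step i (a,b,c)).2.2] := by
  funext j
  fin_cases i <;> fin_cases j <;>
    simp [A, step, Matrix.vecMul, dotProduct, Fin.sum_univ_three, Matrix.cons_val', Matrix.cons_val_zero, Matrix.cons_val_one, Matrix.head_cons, Matrix.empty_val', Matrix.cons_val_fin_one, Matrix.head_fin_const, Matrix.vecHead, Matrix.vecTail] <;> first | ring | (right; simp [Matrix.vecHead, Matrix.vecTail])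

lemma Δ_eq (I : List (Fin 3)) : ∀ (a b c : ℤ),
    vecMul ![a,b,c] ((I.map A).prod) =
      ![(run (a,b,c) I).1, (run (a,b,c) I).2.1, (run (a,b,c) I).2.2] := by
  induction I with
  | nil =>
    intro a b c
    funext j
    fin_cases j <;> simp [run]
  | cons i I ih =>
    intro a b c
    rw [List.map_cons, List.prod_cons, ← Matrix.vecMul_vecMul, vecMul_A, ih]
    have : run (a,b,c) (i :: I) = run ((step i (a,b,c)).1, (step i (a,b,c)).2.1, (step i (a,b,c)).2.2) I := by
      simp [run]
    rw [this]

def Ssum (p : ℤ × ℤ × ℤ) : ℤ := p.1 + p.2.1 + p.2.2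

def Pos (p : ℤ × ℤ × ℤ) : Prop := 1 ≤ p.1 ∧ 1 ≤ p.2.1 ∧ 1 ≤ p.2.2

lemma pos_step (i : Fin 3) (p : ℤ × ℤ × ℤ) (h : Pos p) : Pos (step i p) := by
  obtain ⟨h1, h2, h3⟩ := h
  fin_cases i <;> simp [step, Pos] <;> omega

lemma sum_step_ge (i : Fin 3) (p : ℤ × ℤ × ℤ) (h : Pos p) :
    Ssum p + 2 ≤ Ssum (step i p) := by
  obtain ⟨h1, h2, h3⟩ := h
  fin_cases i <;> simp [step, Ssum] <;> omega

lemma step_third (i : Fin 3) (p : ℤ × ℤ × ℤ) : (step i p).2.2 = Ssum p := by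
  fin_cases i <;> simp [step, Ssum]

lemma pos_run (I : List (Fin 3)) : ∀ p, Pos p → Pos (run p I) := by
  induction I with
  | nil => intro p h; exact h
  | cons i I ih => intro p h; exact ih _ (pos_step i p h)

lemma sum_run_ge (I : List (Fin 3)) : ∀ p, Pos p →
    Ssum p + 2 * I.length ≤ Ssum (run p I) := by
  induction I with
  | nil => intro p _; simp [run]
  | cons i I ih =>
    intro p h
    have h1 := sum_step_ge i p h
    have h2 := ih (step i p) (pos_step i p h)
    simp only [run, List.length_cons]
    push_cast
    push_cast at h2
    omega

lemma run_zeros (I : List (Fin 3)) : ∀ s : ℤ, (∀ i ∈ I, i = 0) →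
    run (1,1,s) I = (1, 1, s + 2 * I.length) := by
  induction I with
  | nil => intro s _; simp [run]
  | cons i I ih =>
    intro s h
    have hi : i = 0 := h i (by simp)
    subst hi
    have : step 0 ((1:ℤ),(1:ℤ),s) = (1,1,s+2) := by simp [step]; ring
    simp only [run, this, ih (s+2) (fun j hj => h j (by simp [hj])), List.length_cons]
    push_cast
    ring_nf

lemma eq_case (I : List (Fin 3)) : ∀ s : ℤ, 3 ≤ s →
    Ssum (run (1,1,s) I) = s + 2 + 2 * I.length → ∀ i ∈ I, i = 0 := by
  induction I with
  | nil => intro s _ _; simp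
  | cons i I ih =>
    intro s hs hsum
    have h3 : i = 0 ∨ i = 1 ∨ i = 2 := by fin_cases i <;> simp
    rcases h3 with hi | hi | hi <;> subst hi
    · have hst : step 0 ((1:ℤ),(1:ℤ),s) = (1,1,s+2) := by simp [step]; ring_nf
      simp only [run, hst, List.length_cons] at hsum
      have := ih (s+2) (by omega) (by push_cast at hsum ⊢; omega)
      intro j hj
      rcases List.mem_cons.1 hj with h | h
      · simp [h]
      · exact this j h
    · exfalso
      have hst : step 1 ((1:ℤ),(1:ℤ),s) = (1,s,s+2) := by simp [step]; ring_nf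
      have hpos : Pos ((1:ℤ),s,s+2) := by refine ⟨le_refl 1, ?_, ?_⟩ <;> simp <;> omega
      have := sum_run_ge I (1,s,s+2) hpos
      simp only [run, hst, List.length_cons] at hsum
      simp only [Ssum] at this hsum
      push_cast at hsum this
      omega
    · exfalso
      have hst : step 2 ((1:ℤ),(1:ℤ),s) = (s,1,s+2) := by simp [step]; ring_nf
      have hpos : Pos (s,(1:ℤ),s+2) := by refine ⟨?_, le_refl 1, ?_⟩ <;> simp <;> omega
      have := sum_run_ge I (s,1,s+2) hpos
      simp only [run, hst, List.length_cons] at hsum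
      simp only [Ssum] at this hsum
      push_cast at hsum this
      omega

lemma run_append (I J : List (Fin 3)) : ∀ p, run p (I ++ J) = run (run p I) J := by
  induction I with
  | nil => intro p; simp [run]
  | cons i I ih => intro p; simp only [List.cons_append, run]; exact ih _

lemma step_start (i : Fin 3) : step i ((1:ℤ),(1:ℤ),(1:ℤ)) = (1,1,3) := by
  fin_cases i <;> simp [step] <;> ring

lemma Δ_third (I : List (Fin 3)) : Δ I 2 = (run (1,1,1) I).2.2 := by
  unfold Δ
  rw [Δ_eq]
  simp

lemma char (m : ℕ) (f : Fin (m+2) → Fin 3) :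
    Δ (List.ofFn f) 2 = 2*((m:ℤ)+2)+1 ↔
      ∀ k : Fin (m+2), k ≠ 0 → k ≠ Fin.last (m+1) → f k = 0 := by
  have hdec : List.ofFn f =
      f 0 :: (List.ofFn (fun i : Fin m => f i.castSucc.succ) ++ [f (Fin.last (m+1))]) := by
    rw [List.ofFn_succ]
    congr 1
    rw [List.ofFn_succ']
    simp [List.concat_eq_append, Fin.succ_last]
  have hval : Δ (List.ofFn f) 2 =
      Ssum (run (1,1,3) (List.ofFn (fun i : Fin m => f i.castSucc.succ))) := by
    rw [Δ_third, hdec]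
    show (run (step (f 0) (1,1,1)) _).2.2 = _
    rw [step_start, run_append]
    show (step _ _).2.2 = _
    rw [step_third]
  rw [hval]
  constructor
  · intro h k hk0 hkl
    have hall := eq_case (List.ofFn (fun i : Fin m => f i.castSucc.succ)) 3 (by norm_num)
      (by rw [h]; simp [List.length_ofFn]; ring)
    have hk1 : 1 ≤ k.val := by
      rcases Nat.eq_zero_or_pos k.val with h0 | h0
      · exact absurd (Fin.ext h0) hk0
      · exact h0
    have hkm : k.val ≤ m := by
      have := k.isLt
      rcases Nat.lt_or_ge k.val (m+1) with h0 | h0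
      · omega
      · exfalso; exact hkl (Fin.ext (by simp [Fin.last]; omega))
    set i : Fin m := ⟨k.val - 1, by omega⟩ with hi
    have hik : i.castSucc.succ = k := by
      apply Fin.ext
      simp [Fin.val_succ, Fin.castSucc, hi]
      omega
    rw [← hik]
    exact hall _ (by rw [List.mem_ofFn]; exact ⟨i, rfl⟩)
  · intro h
    have hz : ∀ i ∈ List.ofFn (fun i : Fin m => f i.castSucc.succ), i = 0 := by
      intro i hi
      rw [List.mem_ofFn] at hi
      obtain ⟨j, hj⟩ := hi
      rw [← hj]
      apply h
      · intro hc
        have := congrArg Fin.val hc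
        simp [Fin.val_succ] at this
      · intro hc
        have := congrArg Fin.val hc
        simp [Fin.val_succ, Fin.last] at this
        omega
    rw [run_zeros _ _ hz]
    simp [Ssum, List.length_ofFn]
    ring

def g (m : ℕ) (p : Fin 3 × Fin 3) : Fin (m+2) → Fin 3 :=
  fun k => if k = 0 then p.1 else if k = Fin.last (m+1) then p.2 else 0

lemma g_inj (m : ℕ) : Function.Injective (g m) := by
  intro p q h
  have hne : (Fin.last (m+1) : Fin (m+2)) ≠ 0 := by
    simp [Fin.ext_iff, Fin.last]
  have h0 := congrFun h 0
  have hl := congrFun h (Fin.last (m+1))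
  simp [g] at h0
  simp [g, hne] at hl
  exact Prod.ext h0 hl


theorem stmt7 (n : ℕ) (hn : 2 ≤ n) :
    δ n 2 (2 * (n : ℤ) + 1) = 9 := by
  obtain ⟨m, rfl⟩ : ∃ m, n = m + 2 := ⟨n - 2, by omega⟩
  unfold δ
  have hc : ∀ f : Fin (m+2) → Fin 3,
      (Δ (List.ofFn f) 2 = 2 * ((m+2 : ℕ) : ℤ) + 1) ↔
        (∀ k, k ≠ 0 → k ≠ Fin.last (m+1) → f k = 0) := by
    intro f
    have hcast : (((m+2:ℕ)):ℤ) = (m:ℤ)+2 := by push_cast; ring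
    rw [hcast]
    exact char m f
  rw [Finset.filter_congr (fun f _ => (hc f))]
  have himg : (Finset.univ.filter
      (fun f : Fin (m+2) → Fin 3 => ∀ k, k ≠ 0 → k ≠ Fin.last (m+1) → f k = 0)) =
      Finset.image (g m) Finset.univ := by
    ext f
    simp only [Finset.mem_filter, Finset.mem_image, Finset.mem_univ, true_and]
    constructor
    · intro h
      refine ⟨(f 0, f (Fin.last (m+1))), ?_⟩
      funext k
      by_cases h0 : k = 0
      · subst h0; simp [g]
      · by_cases hl : k = Fin.last (m+1)
        · subst hl; simp [g]
        · simp [g, h0, hl]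
          exact (h k h0 hl).symm
    · rintro ⟨p, rfl⟩
      intro k hk0 hkl
      simp [g, hk0, hkl]
  rw [himg, Finset.card_image_of_injective _ (g_inj m)]
  simp
end

section
/- For every n ≥ 0 and every integer m, δₙ(m) = δ_{n+1}¹(m) = δ_{n+1}²(m); that is, the total number of occurrences of m at level n equals the number of occurrences of m as a first component at level n+1, and also equals the number of occurrences of m as a second component at level n+1. -/
open Matrix

lemma ofFn_snoc {n : ℕ} (f : Fin n → Fin 3) (i : Fin 3) :
    List.ofFn (Fin.snoc f i) = List.ofFn f ++ [i] := by
  rw [List.ofFn_succ']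
  simp [Fin.snoc_castSucc, Fin.snoc_last, List.concat_eq_append]

lemma Δ_snoc {n : ℕ} (f : Fin n → Fin 3) (i : Fin 3) :
    Δ (List.ofFn (Fin.snoc f i)) = Matrix.vecMul (Δ (List.ofFn f)) (A i) := by
  unfold Δ
  rw [ofFn_snoc]
  simp only [List.map_append, List.prod_append, List.map_cons, List.map_nil,
    List.prod_cons, List.prod_nil, mul_one, Matrix.vecMul_vecMul]

lemma Δ_snoc0 {n : ℕ} (f : Fin n → Fin 3) (i : Fin 3) :
    Δ (List.ofFn (Fin.snoc f i)) 0 = Δ (List.ofFn f) i := by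
  rw [Δ_snoc]
  fin_cases i <;>
    · show (Matrix.vecMul _ _) 0 = _
      rw [Matrix.vecMul]
      simp [A, dotProduct, Fin.sum_univ_three, Matrix.vecHead, Matrix.vecTail]

lemma Δ_snoc1 {n : ℕ} (f : Fin n → Fin 3) (i : Fin 3) :
    Δ (List.ofFn (Fin.snoc f i)) 1 = Δ (List.ofFn f) (i + 1) := by
  rw [Δ_snoc]
  fin_cases i <;>
    · show (Matrix.vecMul _ _) 1 = _
      rw [Matrix.vecMul]
      simp [A, dotProduct, Fin.sum_univ_three, Matrix.vecHead, Matrix.vecTail]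

/-- The snoc equivalence. -/
def snocE (n : ℕ) : Fin 3 × (Fin n → Fin 3) ≃ (Fin (n + 1) → Fin 3) where
  toFun p := Fin.snoc p.2 p.1
  invFun g := (g (Fin.last n), fun k => g k.castSucc)
  left_inv p := by simp
  right_inv g := Fin.snoc_init_self g

lemma count_snoc {n : ℕ} (j : Fin 3) (σ : Fin 3 → Fin 3) (m : ℤ)
    (hσ : ∀ (f : Fin n → Fin 3) (i : Fin 3),
      Δ (List.ofFn (Fin.snoc f i)) j = Δ (List.ofFn f) (σ i)) :
    δ (n + 1) j m = ∑ i : Fin 3, δ n (σ i) m := by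
  calc δ (n + 1) j m
      = Fintype.card {g : Fin (n + 1) → Fin 3 // Δ (List.ofFn g) j = m} :=
        (Fintype.card_subtype _).symm
    _ = Fintype.card {p : Fin 3 × (Fin n → Fin 3) // Δ (List.ofFn p.2) (σ p.1) = m} := by
        refine Fintype.card_congr (Equiv.subtypeEquiv (snocE n) ?_).symm
        intro p
        show Δ (List.ofFn p.2) (σ p.1) = m ↔ Δ (List.ofFn (Fin.snoc p.2 p.1)) j = m
        rw [hσ]
    _ = Fintype.card (Σ i : Fin 3, {f : Fin n → Fin 3 // Δ (List.ofFn f) (σ i) = m}) :=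
        Fintype.card_congr
          (Equiv.subtypeProdEquivSigmaSubtype (fun i (f : Fin n → Fin 3) =>
            Δ (List.ofFn f) (σ i) = m))
    _ = ∑ i : Fin 3, Fintype.card {f : Fin n → Fin 3 // Δ (List.ofFn f) (σ i) = m} :=
        Fintype.card_sigma
    _ = ∑ i : Fin 3, δ n (σ i) m := by
        simp [δ, Fintype.card_subtype]

theorem stmt8 (n : ℕ) (m : ℤ) :
    δtot n m = δ (n + 1) 0 m ∧ δtot n m = δ (n + 1) 1 m := by
  constructor
  · rw [count_snoc 0 id m (fun f i => Δ_snoc0 f i)]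
    simp [δtot, Fin.sum_univ_three]
  · rw [count_snoc 1 (fun i => i + 1) m (fun f i => Δ_snoc1 f i)]
    simp only [Fin.sum_univ_three]
    show δtot n m = δ n 1 m + δ n 2 m + δ n 0 m
    unfold δtot; omega
end

section
/- For every k ≥ 1 and every m ≥ 0, δ_{k+m}(2k+1) = 2^m · δ_k(2k+1); that is, beyond level k the number of occurrences of the odd number 2k+1 doubles at each subsequent level. -/
open Matrix

/-!
Right multiplication by `A i` sends `w = (w₀, w₁, w₂)` to `(w_i, w_{i+1}, w₀ + w₁ + w₂)`,
indices mod 3. Hence every entry stays positive and the entry sum grows by at least 2 per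
letter, so at level `n + 1` the third coordinate is at least `2n + 3`. Below that bound only the
first two coordinates count, and each of them runs exactly once over all three coordinates of
level `n`: the count doubles. Since `2k + 1 < 2n + 3` for every level `n ≥ k`, this applies at
each step.
-/
open Finset

lemma card_filter_eq_sum_card_filter_snoc {α : Type*} [Fintype α] {n : ℕ}
    (p : (Fin (n + 1) → α) → Prop) [DecidablePred p] :
    #{f | p f} = ∑ a, #{g : Fin n → α | p (Fin.snoc g a)} := by
  simp only [card_filter]
  rw [← Fintype.sum_prod_type', ← (Fin.snocEquiv fun _ => α).sum_comp]
  rfl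

lemma vecMul_A_s9 (w : Fin 3 → ℤ) (i : Fin 3) :
    vecMul w (A i) = ![w i, w (i + 1), ∑ j, w j] := by
  funext j
  fin_cases i <;> fin_cases j <;> simp [A, vecMul, dotProduct, Fin.sum_univ_three]

lemma Δ_append_singleton (l : List (Fin 3)) (i : Fin 3) :
    Δ (l ++ [i]) = vecMul (Δ l) (A i) := by
  simp [Δ, List.prod_append, vecMul_vecMul]

lemma Δ_pos (l : List (Fin 3)) (j : Fin 3) : 0 < Δ l j := by
  induction l using List.reverseRecOn generalizing j with
  | nil => fin_cases j <;> simp [Δ]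
  | append_singleton l i ih =>
    rw [Δ_append_singleton, vecMul_A_s9]
    fin_cases j
    · exact ih i
    · exact ih (i + 1)
    · simpa using sum_pos (fun j _ => ih j) univ_nonempty

lemma two_mul_length_add_three_le_sum_Δ (l : List (Fin 3)) :
    2 * l.length + 3 ≤ ∑ j, Δ l j := by
  induction l using List.reverseRecOn with
  | nil => simp [Δ, Fin.sum_univ_three]
  | append_singleton l i ih =>
    have := Δ_pos l i
    have := Δ_pos l (i + 1)
    rw [Δ_append_singleton, vecMul_A_s9, Fin.sum_univ_three]
    simp only [List.length_append, List.length_singleton]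
    push_cast
    linarith

lemma δ_succ (n : ℕ) (j : Fin 3) (M : ℤ) :
    δ (n + 1) j M = ∑ i, #{g : Fin n → Fin 3 | vecMul (Δ (List.ofFn g)) (A i) j = M} := by
  rw [δ, card_filter_eq_sum_card_filter_snoc]
  simp only [List.ofFn_succ', Fin.snoc_castSucc, Fin.snoc_last, List.concat_eq_append,
    Δ_append_singleton]

lemma δtot_eq_sum (n : ℕ) (M : ℤ) : δtot n M = ∑ j, δ n j M := by
  rw [δtot, Fin.sum_univ_three]

lemma δ_succ_zero (n : ℕ) (M : ℤ) : δ (n + 1) 0 M = δtot n M := by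
  simp only [δ_succ, vecMul_A_s9, Matrix.cons_val_zero, δtot_eq_sum]
  rfl

lemma δ_succ_one (n : ℕ) (M : ℤ) : δ (n + 1) 1 M = δtot n M := by
  simp only [δ_succ, vecMul_A_s9, Matrix.cons_val_one, Matrix.cons_val_zero, δtot_eq_sum]
  exact Equiv.sum_comp (Equiv.addRight 1) fun j => δ n j M

lemma δ_succ_two {n : ℕ} {M : ℤ} (hM : M < 2 * n + 3) : δ (n + 1) 2 M = 0 := by
  rw [δ_succ]
  refine sum_eq_zero fun i _ => card_eq_zero.2 <| filter_eq_empty_iff.2 fun g _ => ?_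
  have := two_mul_length_add_three_le_sum_Δ (List.ofFn g)
  simp only [vecMul_A_s9, Matrix.cons_val_two, Matrix.tail_cons, Matrix.head_cons,
    List.length_ofFn] at this ⊢
  omega

lemma δtot_succ {n : ℕ} {M : ℤ} (hM : M < 2 * n + 3) : δtot (n + 1) M = 2 * δtot n M := by
  rw [δtot, δ_succ_zero, δ_succ_one, δ_succ_two hM]
  ring

theorem stmt9_general (k m : ℕ) :
    δtot (k + m) (2 * (k : ℤ) + 1) = 2 ^ m * δtot k (2 * (k : ℤ) + 1) := by
  induction m with
  | zero => simp
  | succ m ih =>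
    rw [← add_assoc, δtot_succ (by push_cast; omega), ih, pow_succ]
    ring

theorem stmt9 (k m : ℕ) (hk : 1 ≤ k) :
    δtot (k + m) (2 * (k : ℤ) + 1) = 2 ^ m * δtot k (2 * (k : ℤ) + 1) :=
  stmt9_general k m
end

section
/- Matrix formula for Stern's diatomic sequence: let α : ℕ → ℕ satisfy α(0) = 0, α(1) = 1, α(2n) = α(n), and α(2n+1) = α(n) + α(n+1) for all n ≥ 1. Let b₀ = ![![1,1],![0,1]], b₁ = ![![1,0],![1,1]], and M = ![![0,1],![1,1]] be 2×2 integer matrices. Then for every k ≥ 1 and every choice of i₁,…,i_k ∈ {0,1}, setting N = 2^k + 1 + i_k·2^{k-1} + i_{k-1}·2^{k-2} + ⋯ + i₁, one has α(N) = (0 1)·M·b_{i_k}·b_{i_{k-1}}·⋯·b_{i₁}·(0,1)ᵀ, i.e. α(N) is the bottom-right entry of the matrix M·b_{i_k}·⋯·b_{i₁}. -/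
/-!
Read the binary digits of `N` from the top: appending a digit `d` to `n` sends `n` to `2n + d`,
and the recursion shows that the pair `(α n, α (n + 1))`, as a row vector, is then multiplied on
the right by `b d`. Starting from `n = 1`, whose pair `(α 1, α 2) = (1, 1)` is the bottom row of
`M`, the bottom row of `M * b_{i_k} * ⋯ * b_{i_1}` is `(α (N - 1), α N)`.
-/

open Matrix

/-- The matrices `b₀` and `b₁`. -/
def b : Fin 2 → Matrix (Fin 2) (Fin 2) ℕ :=
  ![!![1,1; 0,1], !![1,0; 1,1]]

/-- The matrix `M`. -/
def M : Matrix (Fin 2) (Fin 2) ℕ := !![0,1; 1,1]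

def sternPair (α : ℕ → ℕ) (n : ℕ) : Fin 2 → ℕ := ![α n, α (n + 1)]

section SternPair

variable {α : ℕ → ℕ} (heven : ∀ n, 1 ≤ n → α (2 * n) = α n)
  (hodd : ∀ n, 1 ≤ n → α (2 * n + 1) = α n + α (n + 1))
include heven hodd

lemma sternPair_vecMul_b {n : ℕ} (hn : 1 ≤ n) (d : Fin 2) :
    sternPair α n ᵥ* b d = sternPair α (2 * n + d) := by
  have hsucc : α (2 * n + 2) = α (n + 1) := heven (n + 1) (by omega)
  ext j
  fin_cases d <;> fin_cases j <;>
    simp [sternPair, b, vecMul, dotProduct, Fin.sum_univ_two, heven n hn, hodd n hn, hsucc]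

lemma sternPair_vecMul_prod (k : ℕ) (i : Fin k → Fin 2) {m : ℕ} (hm : 1 ≤ m) :
    sternPair α m ᵥ* (List.ofFn fun j => b (i (Fin.rev j))).prod =
      sternPair α (2 ^ k * m + ∑ j, (i j : ℕ) * 2 ^ (j : ℕ)) := by
  induction k generalizing m with
  | zero => simp
  | succ k ih =>
    have hrest : (fun j : Fin k => b (i (Fin.rev j.succ))) =
        fun j => b ((i ∘ Fin.castSucc) (Fin.rev j)) := by
      ext1 j; simp [Fin.rev_succ]
    rw [List.ofFn_succ, List.prod_cons, ← vecMul_vecMul, Fin.rev_zero, hrest,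
      sternPair_vecMul_b heven hodd hm, ih _ (by omega), Fin.sum_univ_castSucc]
    simp only [Function.comp_apply, Fin.val_castSucc, Fin.val_last]
    congr 1
    ring

end SternPair

theorem stmt14_general (α : ℕ → ℕ) (h1 : α 1 = 1)
    (heven : ∀ n, 1 ≤ n → α (2 * n) = α n)
    (hodd : ∀ n, 1 ≤ n → α (2 * n + 1) = α n + α (n + 1))
    (k : ℕ) (i : Fin k → Fin 2) :
    α (2 ^ k + 1 + ∑ j : Fin k, (i j : ℕ) * 2 ^ (j : ℕ)) =
      (M * (List.ofFn (fun j : Fin k => b (i (Fin.rev j)))).prod) 1 1 := by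
  have hM : M 1 = sternPair α 1 := by
    ext j; fin_cases j <;> simp [M, sternPair, h1, heven 1 le_rfl]
  rw [mul_apply_eq_vecMul, hM, sternPair_vecMul_prod heven hodd k i le_rfl]
  simp only [sternPair, mul_one, cons_val_one, cons_val_zero]
  rw [add_right_comm]

theorem stmt14 (α : ℕ → ℕ) (h0 : α 0 = 0) (h1 : α 1 = 1)
    (heven : ∀ n, 1 ≤ n → α (2 * n) = α n)
    (hodd : ∀ n, 1 ≤ n → α (2 * n + 1) = α n + α (n + 1))
    (k : ℕ) (hk : 1 ≤ k) (i : Fin k → Fin 2) :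
    α (2 ^ k + 1 + ∑ j : Fin k, (i j : ℕ) * 2 ^ (j : ℕ)) =
      (M * (List.ofFn (fun j : Fin k => b (i (Fin.rev j)))).prod) 1 1 :=
  stmt14_general α h1 heven hodd k i
end
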